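/- arXiv:2604.26826 — 3 statements merged into one kernel-verified Lean document; each statement's English description precedes it below -/
import Mathlib

section
/- (Lemma A.1, uniform convergence of sample second-moment matrices.) Fix d ∈ ℕ, ε > 0, and Σ ∈ Matrix (Fin d) (Fin d) ℝ. For each integer N ≥ 1 let α⁰_N : Fin N → EuclideanSpace ℝ (Fin d), and assume that ‖(1/N) · ∑_{i : Fin N} Matrix.vecMulVec (α⁰_N i) (α⁰_N i) − Σ‖_F → 0 as N → ∞. Then the convergence of sample second-moment matrices holds uniformly over the ε-ball around α⁰_N: for every δ > 0 there exists N₀ such that for every N ≥ N₀ and every α : Fin N → EuclideanSpace ℝ (Fin d) satisfying ∑_{i : Fin N} ‖α i − α⁰_N i‖² ≤ ε², one has ‖(1/N) · ∑_{i : Fin N} Matrix.vecMulVec (α i) (α i) − Σ‖_F ≤ δ. -/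
/-!
Write `α = α⁰ + h` with `∑ ‖hᵢ‖² ≤ ε²`. Expanding the outer products, the sample second moments
of `α` and `α⁰` differ by `(1/N) ∑ (α⁰ᵢ hᵢᵀ + hᵢ α⁰ᵢᵀ + hᵢ hᵢᵀ)`, whose Frobenius norm is at most
`(2 |ε| √(∑ ‖α⁰ᵢ‖²) + ε²) / N` by Cauchy–Schwarz. Since `(1/N) ∑ ‖α⁰ᵢ‖²` is the trace of the
second moment of `α⁰`, it converges to `trace Σ`, so this bound is `O(1/√N)` uniformly in `α`.
-/

open scoped BigOperators

open Filter Topology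

attribute [local instance] Matrix.frobeniusSeminormedAddCommGroup

attribute [local instance] Matrix.frobeniusNormSMulClass

namespace Matrix

variable {n : Type*}

theorem vecMulVec_self_sub_vecMulVec_self (a b : EuclideanSpace ℝ n) :
    vecMulVec b b - vecMulVec a a =
      vecMulVec a (b - a) + vecMulVec (b - a) a + vecMulVec (b - a) (b - a) := by
  ext i j
  simp only [sub_apply, add_apply, vecMulVec_apply, PiLp.sub_apply]
  ring

variable [Fintype n]

theorem frobenius_norm_vecMulVec_le {𝕜 m : Type*} [RCLike 𝕜] [Fintype m]
    (u : EuclideanSpace 𝕜 m) (v : EuclideanSpace 𝕜 n) : ‖vecMulVec u v‖ ≤ ‖u‖ * ‖v‖ := by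
  simpa [vecMulVec_eq Unit] using frobenius_norm_mul (replicateCol Unit u) (replicateRow Unit v)

theorem trace_vecMulVec_self (u : EuclideanSpace ℝ n) : trace (vecMulVec u u) = ‖u‖ ^ 2 := by
  rw [trace_vecMulVec, ← real_inner_self_eq_norm_sq, EuclideanSpace.inner_eq_star_dotProduct]
  simp

theorem norm_vecMulVec_self_sub_le (a b : EuclideanSpace ℝ n) :
    ‖vecMulVec b b - vecMulVec a a‖ ≤ 2 * (‖a‖ * ‖b - a‖) + ‖b - a‖ ^ 2 := by
  rw [vecMulVec_self_sub_vecMulVec_self]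
  calc _ ≤ ‖vecMulVec a (b - a)‖ + ‖vecMulVec (b - a) a‖ + ‖vecMulVec (b - a) (b - a)‖ :=
        norm_add₃_le
    _ ≤ ‖a‖ * ‖b - a‖ + ‖b - a‖ * ‖a‖ + ‖b - a‖ * ‖b - a‖ := by
        gcongr <;> exact frobenius_norm_vecMulVec_le _ _
    _ = _ := by ring

theorem norm_sum_vecMulVec_self_sub_le {ι : Type*} [Fintype ι] (a b : ι → EuclideanSpace ℝ n) :
    ‖∑ i, vecMulVec (b i) (b i) - ∑ i, vecMulVec (a i) (a i)‖ ≤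
      2 * (√(∑ i, ‖a i‖ ^ 2) * √(∑ i, ‖b i - a i‖ ^ 2)) + ∑ i, ‖b i - a i‖ ^ 2 := by
  rw [← Finset.sum_sub_distrib]
  calc _ ≤ ∑ i, (2 * (‖a i‖ * ‖b i - a i‖) + ‖b i - a i‖ ^ 2) :=
        (norm_sum_le _ _).trans (Finset.sum_le_sum fun i _ => norm_vecMulVec_self_sub_le _ _)
    _ = 2 * ∑ i, ‖a i‖ * ‖b i - a i‖ + ∑ i, ‖b i - a i‖ ^ 2 := by
        rw [Finset.sum_add_distrib, Finset.mul_sum]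
    _ ≤ _ := by gcongr; exact Real.sum_mul_le_sqrt_mul_sqrt _ _ _

noncomputable def secondMoment {N : ℕ} (β : Fin N → EuclideanSpace ℝ n) : Matrix n n ℝ :=
  (1 / (N : ℝ)) • ∑ i, vecMulVec (β i) (β i)

theorem trace_secondMoment {N : ℕ} (β : Fin N → EuclideanSpace ℝ n) :
    trace (secondMoment β) = (∑ i, ‖β i‖ ^ 2) / N := by
  simp only [secondMoment, trace_smul, trace_sum, trace_vecMulVec_self, smul_eq_mul]
  ring

theorem norm_secondMoment_sub_le {N : ℕ} (β β₀ : Fin N → EuclideanSpace ℝ n) {r : ℝ}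
    (hβ : ∑ i, ‖β i - β₀ i‖ ^ 2 ≤ r ^ 2) :
    ‖secondMoment β - secondMoment β₀‖ ≤
      2 * |r| * √(trace (secondMoment β₀) / N) + r ^ 2 / N := by
  have hdist : √(∑ i, ‖β i - β₀ i‖ ^ 2) ≤ |r| :=
    (Real.sqrt_le_sqrt hβ).trans_eq (Real.sqrt_sq_eq_abs r)
  have hscale : √(trace (secondMoment β₀) / N) = √(∑ i, ‖β₀ i‖ ^ 2) / N := by
    rw [trace_secondMoment, div_div, Real.sqrt_div' _ (by positivity),
      Real.sqrt_mul_self (by positivity)]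
  rw [hscale, secondMoment, secondMoment, ← smul_sub, norm_smul,
    Real.norm_of_nonneg (by positivity)]
  calc _ ≤ 1 / (N : ℝ) * (2 * (√(∑ i, ‖β₀ i‖ ^ 2) * |r|) + r ^ 2) := by
        gcongr
        refine (norm_sum_vecMulVec_self_sub_le β₀ β).trans ?_
        gcongr
    _ = _ := by ring

end Matrix

theorem uniform_convergence_second_moment_general
    (d : ℕ) (ε : ℝ) (Sig : Matrix (Fin d) (Fin d) ℝ)
    (α0 : (N : ℕ) → Fin N → EuclideanSpace ℝ (Fin d))
    (hconv : Filter.Tendsto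
      (fun N : ℕ =>
        ‖(1 / (N : ℝ)) • (∑ i : Fin N, Matrix.vecMulVec (α0 N i) (α0 N i)) - Sig‖)
      Filter.atTop (nhds 0)) :
    ∀ δ > (0 : ℝ), ∃ N₀ : ℕ, ∀ N : ℕ, N₀ ≤ N → 1 ≤ N →
      ∀ α : Fin N → EuclideanSpace ℝ (Fin d),
        (∑ i : Fin N, ‖α i - α0 N i‖ ^ 2) ≤ ε ^ 2 →
        ‖(1 / (N : ℝ)) • (∑ i : Fin N, Matrix.vecMulVec (α i) (α i)) - Sig‖ ≤ δ := by
  intro δ hδ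
  change Tendsto (fun N => ‖Matrix.secondMoment (α0 N) - Sig‖) atTop (𝓝 0) at hconv
  have htrace : Tendsto (fun N => (Matrix.secondMoment (α0 N)).trace) atTop (𝓝 Sig.trace) :=
    (continuous_id.matrix_trace.tendsto Sig).comp (tendsto_iff_norm_sub_tendsto_zero.2 hconv)
  have hbound : Tendsto (fun N : ℕ => ‖Matrix.secondMoment (α0 N) - Sig‖ +
      (2 * |ε| * √((Matrix.secondMoment (α0 N)).trace / N) + ε ^ 2 / N)) atTop (𝓝 0) := by
    simpa only [Real.sqrt_zero, mul_zero, add_zero] using hconv.add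
      (((htrace.div_atTop tendsto_natCast_atTop_atTop).sqrt.const_mul (2 * |ε|)).add
        (tendsto_const_div_atTop_nhds_zero_nat (ε ^ 2)))
  obtain ⟨N₀, hN₀⟩ := eventually_atTop.1 (hbound.eventually (ge_mem_nhds hδ))
  refine ⟨N₀, fun N hN _ α hα => le_trans ?_ (hN₀ N hN)⟩
  calc ‖Matrix.secondMoment α - Sig‖
      ≤ ‖Matrix.secondMoment (α0 N) - Sig‖ +
          ‖Matrix.secondMoment α - Matrix.secondMoment (α0 N)‖ := by
        rw [add_comm]; exact norm_sub_le_norm_sub_add_norm_sub _ _ _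
    _ ≤ _ := by gcongr; exact Matrix.norm_secondMoment_sub_le α (α0 N) hα

/-- Lemma A.1: uniform convergence of sample second-moment matrices over an
`ε`-ball around the reference loadings. -/
theorem uniform_convergence_second_moment
    (d : ℕ) (ε : ℝ) (hε : 0 < ε) (Sig : Matrix (Fin d) (Fin d) ℝ)
    (α0 : (N : ℕ) → Fin N → EuclideanSpace ℝ (Fin d))
    (hconv : Filter.Tendsto
      (fun N : ℕ =>
        ‖(1 / (N : ℝ)) • (∑ i : Fin N, Matrix.vecMulVec (α0 N i) (α0 N i)) - Sig‖)
      Filter.atTop (nhds 0)) :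
    ∀ δ > (0 : ℝ), ∃ N₀ : ℕ, ∀ N : ℕ, N₀ ≤ N → 1 ≤ N →
      ∀ α : Fin N → EuclideanSpace ℝ (Fin d),
        (∑ i : Fin N, ‖α i - α0 N i‖ ^ 2) ≤ ε ^ 2 →
        ‖(1 / (N : ℝ)) • (∑ i : Fin N, Matrix.vecMulVec (α i) (α i)) - Sig‖ ≤ δ :=
  uniform_convergence_second_moment_general d ε Sig α0 hconv
end

section
/- (Uniform Slutsky lemma: a uniformly negligible remainder does not affect uniform convergence of distribution functions, as used in the proof of Theorem 3.1 to dispose of the remainder term of the asymptotic expansion.) Let Ω be a measurable space, Θ an index set, and μ : ℕ → Θ → MeasureTheory.Measure Ω a family of measures with IsProbabilityMeasure (μ n θ) for all n, θ. Let V, R : ℕ → Θ → Ω → ℝ and G : Θ → ℝ → ℝ with each G θ nondecreasing. Assume: (i) for every x ∈ ℝ and every ε > 0 there exists N₀ such that for all n ≥ N₀ and all θ ∈ Θ, |((μ n θ) {ω | V n θ ω ≤ x}).toReal − G θ x| ≤ ε; (ii) for every δ > 0 and every ε > 0 there exists N₀ such that for all n ≥ N₀ and all θ ∈ Θ, (μ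 n θ) {ω | δ < |R n θ ω|} ≤ ENNReal.ofReal ε; (iii) for every ε > 0 there exists δ > 0 such that for all θ ∈ Θ and all x ∈ ℝ, G θ (x + δ) − G θ (x − δ) ≤ ε. Then for every x ∈ ℝ and every ε > 0 there exists N₀ such that for all n ≥ N₀ and all θ ∈ Θ, |((μ n θ) {ω | V n θ ω + R n θ ω ≤ x}).toReal − G θ x| ≤ ε. -/
/-!
On the event `|R| ≤ δ`, the event `V + R ≤ x` is squeezed between `V ≤ x - δ` and `V ≤ x + δ`.
Outside it we lose at most `P(δ < |R|)`, which is uniformly small for large `n`; the two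
bracketing probabilities are uniformly close to `G θ (x ∓ δ)`, and the uniform equicontinuity
of the `G θ` makes these values uniformly close to `G θ x`.
-/

open MeasureTheory Filter

section Sandwich

variable {Ω : Type*} (V R : Ω → ℝ) (x δ : ℝ)

lemma setOf_add_le_subset_union :
    {ω | V ω + R ω ≤ x} ⊆ {ω | V ω ≤ x + δ} ∪ {ω | δ < |R ω|} := by
  intro ω hω
  by_cases hRω : δ < |R ω|
  · exact Or.inr hRω
  · have hω : V ω + R ω ≤ x := hω
    exact Or.inl (show V ω ≤ x + δ by linarith [(abs_le.mp (not_lt.mp hRω)).1])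

lemma setOf_le_sub_subset_union :
    {ω | V ω ≤ x - δ} ⊆ {ω | V ω + R ω ≤ x} ∪ {ω | δ < |R ω|} := by
  intro ω hω
  by_cases hRω : δ < |R ω|
  · exact Or.inr hRω
  · have hω : V ω ≤ x - δ := hω
    exact Or.inl (show V ω + R ω ≤ x by linarith [(abs_le.mp (not_lt.mp hRω)).2])

lemma measureReal_le_add_of_subset_union [MeasurableSpace Ω] {μ : Measure Ω} [IsFiniteMeasure μ]
    {s t u : Set Ω} (h : s ⊆ t ∪ u) : μ.real s ≤ μ.real t + μ.real u :=
  (measureReal_mono h).trans (measureReal_union_le t u)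

lemma abs_measureReal_setOf_add_le_sub_le [MeasurableSpace Ω] {μ : Measure Ω} [IsFiniteMeasure μ]
    {F : ℝ → ℝ} {ε : ℝ} (hF : Monotone F) (hδ : 0 ≤ δ)
    (hup : |μ.real {ω | V ω ≤ x + δ} - F (x + δ)| ≤ ε)
    (hlo : |μ.real {ω | V ω ≤ x - δ} - F (x - δ)| ≤ ε)
    (hFδ : F (x + δ) - F (x - δ) ≤ ε) (hR : μ.real {ω | δ < |R ω|} ≤ ε) :
    |μ.real {ω | V ω + R ω ≤ x} - F x| ≤ 3 * ε := by
  have hupper := measureReal_le_add_of_subset_union (μ := μ) (setOf_add_le_subset_union V R x δ)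
  have hlower := measureReal_le_add_of_subset_union (μ := μ) (setOf_le_sub_subset_union V R x δ)
  have hFlo : F (x - δ) ≤ F x := hF (by linarith)
  have hFup : F x ≤ F (x + δ) := hF (by linarith)
  rw [abs_le] at hup hlo ⊢
  constructor <;> linarith [hup.1, hup.2, hlo.1, hlo.2]

end Sandwich

/-- Uniform Slutsky lemma: a uniformly negligible remainder does not affect
uniform convergence of distribution functions. -/
theorem uniform_slutsky
    {Ω Θ : Type*} [MeasurableSpace Ω]
    (μ : ℕ → Θ → Measure Ω) (hμ : ∀ n θ, IsProbabilityMeasure (μ n θ))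
    (V R : ℕ → Θ → Ω → ℝ) (G : Θ → ℝ → ℝ) (hGmono : ∀ θ, Monotone (G θ))
    (hV : ∀ x : ℝ, ∀ ε > (0 : ℝ), ∃ N₀ : ℕ, ∀ n ≥ N₀, ∀ θ : Θ,
      |((μ n θ) {ω | V n θ ω ≤ x}).toReal - G θ x| ≤ ε)
    (hR : ∀ δ > (0 : ℝ), ∀ ε > (0 : ℝ), ∃ N₀ : ℕ, ∀ n ≥ N₀, ∀ θ : Θ,
      μ n θ {ω | δ < |R n θ ω|} ≤ ENNReal.ofReal ε)
    (hG : ∀ ε > (0 : ℝ), ∃ δ > (0 : ℝ), ∀ θ : Θ, ∀ x : ℝ,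
      G θ (x + δ) - G θ (x - δ) ≤ ε) :
    ∀ x : ℝ, ∀ ε > (0 : ℝ), ∃ N₀ : ℕ, ∀ n ≥ N₀, ∀ θ : Θ,
      |((μ n θ) {ω | V n θ ω + R n θ ω ≤ x}).toReal - G θ x| ≤ ε := by
  intro x ε hε
  have hε3 : 0 < ε / 3 := by positivity
  obtain ⟨δ, hδ, hGδ⟩ := hG (ε / 3) hε3
  have hup := eventually_atTop.2 (hV (x + δ) (ε / 3) hε3)
  have hlo := eventually_atTop.2 (hV (x - δ) (ε / 3) hε3)
  have hsmall := eventually_atTop.2 (hR δ hδ (ε / 3) hε3)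
  refine eventually_atTop.1 ((hup.and (hlo.and hsmall)).mono ?_)
  rintro n ⟨hup, hlo, hsmall⟩ θ
  have := hμ n θ
  have hsandwich := abs_measureReal_setOf_add_le_sub_le (V n θ) (R n θ) x δ (hGmono θ) hδ.le
    (hup θ) (hlo θ) (hGδ θ x) (ENNReal.toReal_le_of_le_ofReal hε3.le (hsmall θ))
  rwa [mul_div_cancel₀ ε three_ne_zero] at hsandwich
end

section
/- (Existence of a uniformly fine partition for a compactly parametrized family of Gaussian distribution functions, the partition step in the proof of Theorem 3.2.) Let Θ be a compact topological space, m : Θ → ℝ continuous, and v : Θ → ℝ≥0 continuous with v θ ≠ 0 for every θ ∈ Θ. Define G θ x = ((ProbabilityTheory.gaussianReal (m θ) (v θ)) (Set.Iic x)).toReal, the cumulative distribution function of the normal distribution with mean m θ and variance v θ. Then for every δ > 0 there exist an integer M ≥ 1 and a strictly monotone increasing a : Fin M → ℝ such that for every θ ∈ Θ: G θ (a 0) ≤ δ, 1 − G θ (a (M−1)) ≤ δ, and G θ (a (i+1)) − G θ (a i) ≤ δ for every index i with i + 1 < M. -/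
/-!
Standardizing, `G θ x = Φ ((x - m θ) / σ θ)` with `Φ` the standard normal distribution function
and `σ = √v`. By compactness the means are bounded and the standard deviations lie in a fixed
interval `[c, C]` with `0 < c`, so one left cutoff `A` and one right cutoff `B` leave tails of mass
at most `δ` for every `θ` at once. Since `Φ` is Lipschitz (its density is at most `1 / √(2π)`),
one mesh `s` makes every increment at most `δ`, uniformly in `θ`. The partition is the
progression `A, A + s, A + 2s, …` stopped at the first point beyond `B`.
-/

open MeasureTheory ProbabilityTheory
open scoped NNReal

open Filter Set Topology Real

namespace ProbabilityTheory

lemma gaussianPDFReal_le (μ : ℝ) (v : ℝ≥0) (x : ℝ) :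
    gaussianPDFReal μ v x ≤ (√(2 * π * v))⁻¹ := by
  rw [gaussianPDFReal]
  refine mul_le_of_le_one_right (by positivity) (Real.exp_le_one_iff.2 ?_)
  exact div_nonpos_of_nonpos_of_nonneg (neg_nonpos.2 (sq_nonneg _)) (by positivity)

lemma cdf_gaussianReal_sub_cdf_le (μ : ℝ) {v : ℝ≥0} (hv : v ≠ 0) {x y : ℝ} (hxy : x ≤ y) :
    cdf (gaussianReal μ v) y - cdf (gaussianReal μ v) x ≤ (√(2 * π * v))⁻¹ * (y - x) := by
  have hIoc : (gaussianReal μ v).real (Ioc x y) = ∫ z in Ioc x y, gaussianPDFReal μ v z := by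
    rw [measureReal_def, gaussianReal_apply_eq_integral μ hv,
      ENNReal.toReal_ofReal (setIntegral_nonneg measurableSet_Ioc fun z _ ↦
        gaussianPDFReal_nonneg μ v z)]
  rw [cdf_eq_real, cdf_eq_real, ← measureReal_sdiff (Iic_subset_Iic.2 hxy) measurableSet_Iic,
    Iic_sdiff_Iic, hIoc]
  calc ∫ z in Ioc x y, gaussianPDFReal μ v z
      ≤ ‖∫ z in Ioc x y, gaussianPDFReal μ v z‖ := le_norm_self _
    _ ≤ (√(2 * π * v))⁻¹ * volume.real (Ioc x y) :=
        norm_setIntegral_le_of_norm_le_const measure_Ioc_lt_top fun z _ ↦ by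
          rw [Real.norm_of_nonneg (gaussianPDFReal_nonneg μ v z)]
          exact gaussianPDFReal_le μ v z
    _ = (√(2 * π * v))⁻¹ * (y - x) := by rw [Real.volume_real_Ioc_of_le hxy]

lemma lipschitzWith_cdf_gaussianReal (μ : ℝ) {v : ℝ≥0} (hv : v ≠ 0) :
    LipschitzWith (√(2 * π * v))⁻¹.toNNReal (cdf (gaussianReal μ v)) := by
  refine LipschitzWith.of_le_add_mul' _ fun x y ↦ ?_
  rcases le_total x y with hxy | hyx
  · have := monotone_cdf (gaussianReal μ v) hxy
    have : 0 ≤ (√(2 * π * v))⁻¹ * dist x y := by positivity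
    linarith
  · have := cdf_gaussianReal_sub_cdf_le μ hv hyx
    rw [Real.dist_eq, abs_of_nonneg (sub_nonneg.2 hyx)]
    linarith

lemma cdf_gaussianReal (μ : ℝ) {v : ℝ≥0} (hv : v ≠ 0) (x : ℝ) :
    cdf (gaussianReal μ v) x = cdf (gaussianReal 0 1) ((x - μ) / √v) := by
  have hσ : 0 < √(v : ℝ) := Real.sqrt_pos.2 (by positivity)
  have hstd : (gaussianReal μ v).map (fun y ↦ (y - μ) / √v) = gaussianReal 0 1 := by
    rw [show (fun y ↦ (y - μ) / √v) = (· / √v) ∘ (· - μ) from rfl,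
      ← Measure.map_map (by fun_prop) (by fun_prop), gaussianReal_map_sub_const,
      gaussianReal_map_div_const, sub_self, zero_div]
    congr
    ext
    simp [Real.sq_sqrt (NNReal.coe_nonneg v), hv]
  rw [cdf_eq_real, cdf_eq_real, ← hstd, map_measureReal_apply (by fun_prop) measurableSet_Iic]
  congr 1
  ext y
  simp [div_le_div_iff_of_pos_right hσ]

end ProbabilityTheory

def IsUniformPartition {Θ : Type*} (F : Θ → ℝ → ℝ) (δ : ℝ) {M : ℕ} (hM : 1 ≤ M)
    (a : Fin M → ℝ) : Prop :=
  StrictMono a ∧ ∀ θ, F θ (a ⟨0, hM⟩) ≤ δ ∧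
    1 - F θ (a ⟨M - 1, Nat.sub_lt hM Nat.one_pos⟩) ≤ δ ∧
    ∀ i : Fin M, ∀ h : i.val + 1 < M, F θ (a ⟨i.val + 1, h⟩) - F θ (a i) ≤ δ

section UniformPartition

variable {Θ : Type*} {δ : ℝ}

theorem exists_isUniformPartition {F : Θ → ℝ → ℝ} (hF : ∀ θ, Monotone (F θ)) {A B s : ℝ}
    (hs : 0 < s) (hA : ∀ θ, F θ A ≤ δ) (hB : ∀ θ, 1 - F θ B ≤ δ)
    (hstep : ∀ θ x, F θ (x + s) - F θ x ≤ δ) :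
    ∃ M, ∃ hM : 1 ≤ M, ∃ a : Fin M → ℝ, IsUniformPartition F δ hM a := by
  set N := ⌈(B - A) / s⌉₊
  refine ⟨N + 1, by omega, fun i ↦ A + i * s, fun i j hij ↦ ?_, fun θ ↦ ⟨?_, ?_, fun i h ↦ ?_⟩⟩
  · have : (i : ℝ) < j := by exact_mod_cast hij
    dsimp only
    gcongr
  · simpa using hA θ
  · have hBN : B ≤ A + N * s := by
      have := Nat.le_ceil ((B - A) / s)
      rw [div_le_iff₀ hs] at this
      linarith
    have := hF θ hBN
    simp only [add_tsub_cancel_right]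
    linarith [hB θ]
  · simpa [add_mul, add_assoc] using hstep θ (A + i * s)

variable {Φ : ℝ → ℝ} {m σ : Θ → ℝ}

lemma exists_forall_locationScale_le (hΦ : Monotone Φ) (hbot : Tendsto Φ atBot (𝓝 0))
    (hm : BddBelow (range m)) (hσ : BddAbove (range σ)) (hσ0 : ∀ θ, 0 < σ θ) (hδ : 0 < δ) :
    ∃ A, ∀ θ, Φ ((A - m θ) / σ θ) ≤ δ := by
  obtain ⟨X, hΦX, hX⟩ := ((hbot.eventually (eventually_le_nhds hδ)).and
    (eventually_le_atBot 0)).exists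
  obtain ⟨m₀, hm₀⟩ := hm
  obtain ⟨S, hS⟩ := hσ
  refine ⟨m₀ + S * X, fun θ ↦ (hΦ ?_).trans hΦX⟩
  have := hm₀ ⟨θ, rfl⟩
  have := hS ⟨θ, rfl⟩
  rw [div_le_iff₀ (hσ0 θ)]
  nlinarith

lemma exists_forall_one_sub_locationScale_le (hΦ : Monotone Φ) (htop : Tendsto Φ atTop (𝓝 1))
    (hm : BddAbove (range m)) (hσ : BddAbove (range σ)) (hσ0 : ∀ θ, 0 < σ θ) (hδ : 0 < δ) :
    ∃ B, ∀ θ, 1 - Φ ((B - m θ) / σ θ) ≤ δ := by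
  obtain ⟨X, hΦX, hX⟩ := ((htop.eventually (eventually_ge_nhds (sub_lt_self 1 hδ))).and
    (eventually_ge_atTop 0)).exists
  obtain ⟨m₁, hm₁⟩ := hm
  obtain ⟨S, hS⟩ := hσ
  refine ⟨m₁ + S * X, fun θ ↦ ?_⟩
  suffices X ≤ (m₁ + S * X - m θ) / σ θ by linarith [hΦ this]
  have := hm₁ ⟨θ, rfl⟩
  have := hS ⟨θ, rfl⟩
  rw [le_div_iff₀ (hσ0 θ)]
  nlinarith

lemma exists_pos_forall_locationScale_sub_le (hΦ : UniformContinuous Φ) {c : ℝ} (hc : 0 < c)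
    (hcσ : ∀ θ, c ≤ σ θ) (hδ : 0 < δ) :
    ∃ s > 0, ∀ θ x, Φ ((x + s - m θ) / σ θ) - Φ ((x - m θ) / σ θ) ≤ δ := by
  obtain ⟨η, hη, hΦη⟩ := Metric.uniformContinuous_iff.1 hΦ δ hδ
  refine ⟨c * η / 2, by positivity, fun θ x ↦ ?_⟩
  have hσθ : 0 < σ θ := hc.trans_le (hcσ θ)
  have hclose : dist ((x + c * η / 2 - m θ) / σ θ) ((x - m θ) / σ θ) < η := by
    rw [Real.dist_eq, ← sub_div, add_sub_right_comm, add_sub_cancel_left,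
      abs_of_pos (by positivity), div_lt_iff₀ hσθ]
    nlinarith [hcσ θ]
  exact (le_abs_self _).trans (Real.dist_eq _ _ ▸ hΦη hclose).le

theorem exists_isUniformPartition_locationScale (hΦ : Monotone Φ) (hΦc : UniformContinuous Φ)
    (hbot : Tendsto Φ atBot (𝓝 0)) (htop : Tendsto Φ atTop (𝓝 1))
    (hm : BddBelow (range m)) (hm' : BddAbove (range m)) (hσ : BddAbove (range σ))
    {c : ℝ} (hc : 0 < c) (hcσ : ∀ θ, c ≤ σ θ) (hδ : 0 < δ) :
    ∃ M, ∃ hM : 1 ≤ M, ∃ a : Fin M → ℝ,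
      IsUniformPartition (fun θ x ↦ Φ ((x - m θ) / σ θ)) δ hM a := by
  have hσ0 θ : 0 < σ θ := hc.trans_le (hcσ θ)
  obtain ⟨A, hA⟩ := exists_forall_locationScale_le hΦ hbot hm hσ hσ0 hδ
  obtain ⟨B, hB⟩ := exists_forall_one_sub_locationScale_le hΦ htop hm' hσ hσ0 hδ
  obtain ⟨s, hs, hstep⟩ := exists_pos_forall_locationScale_sub_le (m := m) hΦc hc hcσ hδ
  refine exists_isUniformPartition (fun θ x y hxy ↦ hΦ ?_) hs hA hB hstep
  gcongr
  exact (hσ0 θ).le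

end UniformPartition

/-- Existence of a uniformly fine partition for a compactly parametrized family
of Gaussian distribution functions (partition step in the proof of
Theorem 3.2). -/
theorem gaussian_family_uniform_partition
    {Θ : Type*} [TopologicalSpace Θ] [CompactSpace Θ]
    (m : Θ → ℝ) (hm : Continuous m)
    (v : Θ → ℝ≥0) (hv : Continuous v) (hv0 : ∀ θ, v θ ≠ 0)
    (G : Θ → ℝ → ℝ)
    (hG : ∀ θ x, G θ x = ((gaussianReal (m θ) (v θ)) (Set.Iic x)).toReal) :
    ∀ δ > (0 : ℝ), ∃ M : ℕ, ∃ hM : 1 ≤ M, ∃ a : Fin M → ℝ,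
      StrictMono a ∧ ∀ θ : Θ,
        G θ (a ⟨0, hM⟩) ≤ δ ∧
        1 - G θ (a ⟨M - 1, by omega⟩) ≤ δ ∧
        ∀ i : Fin M, ∀ h : i.val + 1 < M, G θ (a ⟨i.val + 1, h⟩) - G θ (a i) ≤ δ := by
  intro δ hδ
  have hσ : Continuous fun θ ↦ √(v θ : ℝ) := by fun_prop
  obtain ⟨c, hc, hcσ⟩ := isCompact_univ.exists_forall_le' hσ.continuousOn (a := 0)
    fun θ _ ↦ Real.sqrt_pos.2 (NNReal.coe_pos.2 (pos_iff_ne_zero.2 (hv0 θ)))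
  have hGΦ : G = fun θ x ↦ cdf (gaussianReal 0 1) ((x - m θ) / √(v θ : ℝ)) := by
    ext θ x
    rw [hG, ← measureReal_def, ← cdf_eq_real, cdf_gaussianReal _ (hv0 θ)]
  subst hGΦ
  exact exists_isUniformPartition_locationScale (monotone_cdf _)
    (lipschitzWith_cdf_gaussianReal 0 one_ne_zero).uniformContinuous
    (tendsto_cdf_atBot _) (tendsto_cdf_atTop _) (isCompact_range hm).bddBelow
    (isCompact_range hm).bddAbove (isCompact_range hσ).bddAbove hc
    (fun θ ↦ hcσ θ (mem_univ θ)) hδ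
end
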